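/- If man m pushes up a set X of women without incurring regret, then every proposal made during the execution of DA on the true profile also occurs during the execution of DA on the manipulated profile. -/

import Mathlib

/-- A stable marriage profile: `M m` is man `m`'s ranking of women
(`M m k` = his `k`-th favorite woman), `W w` is woman `w`'s ranking of men. -/
structure Profile (n : ℕ) where
  M : Fin n → (Fin n ≃ Fin n)
  W : Fin n → (Fin n ≃ Fin n)

/-- Man `m` strictly prefers woman `w₁` to woman `w₂`. -/
def Profile.mpref {n : ℕ} (P : Profile n) (m w₁ w₂ : Fin n) : Prop :=
  (P.M m).symm w₁ < (P.M m).symm w₂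

/-- Woman `w` strictly prefers man `m₁` to man `m₂`. -/
def Profile.wpref {n : ℕ} (P : Profile n) (w m₁ m₂ : Fin n) : Prop :=
  (P.W w).symm m₁ < (P.W w).symm m₂

/-- State of the Gale–Shapley (deferred acceptance) algorithm:
`next m` is the rank of the next woman `m` will propose to, `wmatch w` is the man
currently (tentatively) held by woman `w`, `props` records all proposals made so far. -/
structure GSState (n : ℕ) where
  next : Fin n → ℕ
  wmatch : Fin n → Option (Fin n)
  props : List (Fin n × Fin n)

/-- Man `m` is currently not held by any woman. -/
def isUnmatched {n : ℕ} (s : GSState n) (m : Fin n) : Bool :=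
  decide (∀ w, s.wmatch w ≠ some m)

/-- One step of men-proposing deferred acceptance: the first unmatched man
proposes to the next woman on his list; she keeps her favorite proposer so far. -/
def GSstep {n : ℕ} (P : Profile n) (s : GSState n) : GSState n :=
  match (List.finRange n).find? (fun m => isUnmatched s m && decide (s.next m < n)) with
  | none => s
  | some m =>
    if h : s.next m < n then
      let w := P.M m ⟨s.next m, h⟩
      let s' : GSState n :=
        { next := Function.update s.next m (s.next m + 1),
          wmatch := s.wmatch,
          props := (m, w) :: s.props }
      match s.wmatch w with
      | none => { s' with wmatch := Function.update s.wmatch w (some m) }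
      | some m' =>
          if (P.W w).symm m < (P.W w).symm m' then
            { s' with wmatch := Function.update s.wmatch w (some m) }
          else s'
    else s

def GSinit (n : ℕ) : GSState n := ⟨fun _ => 0, fun _ => none, []⟩

/-- Run deferred acceptance to completion (at most `n*n` proposals occur). -/
def GSrun {n : ℕ} (P : Profile n) : GSState n := (GSstep P)^[n * n + 1] (GSinit n)

/-- The men-proposing deferred acceptance matching, as a map from men to women. -/
noncomputable def DA {n : ℕ} (P : Profile n) : Fin n → Fin n :=
  fun m => if h : ∃ w, (GSrun P).wmatch w = some m then h.choose else m

/-- Man `m` proposes to woman `w` during the run of deferred acceptance on `P`. -/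
def Proposes {n : ℕ} (P : Profile n) (m w : Fin n) : Prop :=
  (m, w) ∈ (GSrun P).props

/-- `(m, w)` is a blocking pair for the matching `μ` (men to women) w.r.t. profile `P`. -/
def Blocks {n : ℕ} (P : Profile n) (μ : Fin n → Fin n) (m w : Fin n) : Prop :=
  P.mpref m w (μ m) ∧ ∃ m', μ m' = w ∧ P.wpref w m m'

/-- `μ` is a stable matching with respect to profile `P`. -/
def Stable {n : ℕ} (P : Profile n) (μ : Fin n → Fin n) : Prop :=
  Function.Bijective μ ∧ ∀ m w, ¬ Blocks P μ m w

/-- Replace man `m`'s preference list by `e`. -/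
def Profile.updateM {n : ℕ} (P : Profile n) (m : Fin n) (e : Fin n ≃ Fin n) : Profile n :=
  { P with M := Function.update P.M m e }

/-- Replace woman `w`'s preference list by `e`. -/
def Profile.updateW {n : ℕ} (P : Profile n) (w : Fin n) (e : Fin n ≃ Fin n) : Profile n :=
  { P with W := Function.update P.W w e }

/-- The set of women ranked strictly above `w₀` in the list `e`. -/
def Above {n : ℕ} (e : Fin n ≃ Fin n) (w₀ : Fin n) : Set (Fin n) :=
  {w | e.symm w < e.symm w₀}

/-- The set of women ranked strictly below `w₀` in the list `e`. -/
def Below {n : ℕ} (e : Fin n ≃ Fin n) (w₀ : Fin n) : Set (Fin n) :=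
  {w | e.symm w₀ < e.symm w}

/-- `e'` is obtained from man `m`'s true list by pushing up the set `X` and pushing
down the set `Y` around the pivot `DA P m` (the order of women above and below
the pivot is immaterial, cf. Proposition 2 of the paper). -/
def PushUpDown {n : ℕ} (P : Profile n) (m : Fin n) (X Y : Set (Fin n))
    (e' : Fin n ≃ Fin n) : Prop :=
  Above e' (DA P m) = (Above (P.M m) (DA P m) ∪ X) \ Y

/-- `e'` is obtained from `m`'s true list by pushing up the set `X` above `DA P m`. -/
def PushUp {n : ℕ} (P : Profile n) (m : Fin n) (X : Set (Fin n))
    (e' : Fin n ≃ Fin n) : Prop :=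
  PushUpDown P m X ∅ e'

/-- `e'` is obtained from `m`'s true list by pushing down the set `Y` below `DA P m`. -/
def PushDown {n : ℕ} (P : Profile n) (m : Fin n) (Y : Set (Fin n))
    (e' : Fin n ≃ Fin n) : Prop :=
  PushUpDown P m ∅ Y e'

/-- Woman `w` is ranked below `DA P m` in `m`'s true list, and pushing her up
individually leaves `m`'s deferred acceptance partner unchanged (no regret). -/
def NoRegretWoman {n : ℕ} (P : Profile n) (m w : Fin n) : Prop :=
  w ∈ Below (P.M m) (DA P m) ∧
    ∀ e' : Fin n ≃ Fin n, PushUp P m {w} e' → DA (P.updateM m e') m = DA P m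

/-- The no-regret set `W^NR` of accomplice `m`. -/
def WNR {n : ℕ} (P : Profile n) (m : Fin n) : Set (Fin n) :=
  {w | NoRegretWoman P m w}

/-!
Deferred acceptance is man-optimal: every man weakly prefers `DA P` to any matching that is
stable for `P`, and during the run on `P` he proposes exactly to the women weakly above his
partner `DA P m`. After a push-up without regret, `DA P'` is still stable for the true
profile: a pair blocking it for `P` and involving `m` would involve a woman above `DA P m` in
his true list, who stays above it in the manipulated one, so the pair would block for `P'`.
Hence, in his true list, every man's `DA P'` partner is weakly worse than his `DA P` partner,
and all his proposals under `P` recur under `P'`; for `m` the partner is unchanged and the set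
of women above it only grows.
-/

section GaleShapley

variable {n : ℕ}

lemma isUnmatched_eq_true_iff {s : GSState n} {m : Fin n} :
    isUnmatched s m = true ↔ ∀ w, s.wmatch w ≠ some m := by
  simp [isUnmatched]

def acceptState (s : GSState n) (m w : Fin n) : GSState n :=
  { next := Function.update s.next m (s.next m + 1),
    wmatch := Function.update s.wmatch w (some m),
    props := (m, w) :: s.props }

def rejectState (s : GSState n) (m w : Fin n) : GSState n :=
  { next := Function.update s.next m (s.next m + 1),
    wmatch := s.wmatch,
    props := (m, w) :: s.props }

lemma GSstep_cases (P : Profile n) (s : GSState n) :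
    (GSstep P s = s ∧ ∀ m, (∀ w, s.wmatch w ≠ some m) → n ≤ s.next m) ∨
    ∃ m w, (∀ u, s.wmatch u ≠ some m) ∧ ((P.M m).symm w : ℕ) = s.next m ∧
      ((∀ m', s.wmatch w = some m' → P.wpref w m m') ∧ GSstep P s = acceptState s m w ∨
       (∃ m', s.wmatch w = some m' ∧ ¬ P.wpref w m m') ∧ GSstep P s = rejectState s m w) := by
  rcases hf : (List.finRange n).find? (fun x => isUnmatched s x && decide (s.next x < n))
    with - | m
  · refine .inl ⟨by unfold GSstep; rw [hf], fun m hm => ?_⟩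
    simpa [isUnmatched_eq_true_iff, hm] using List.find?_eq_none.mp hf m (List.mem_finRange m)
  · obtain ⟨hum, h⟩ : isUnmatched s m = true ∧ s.next m < n := by
      simpa using List.find?_some hf
    refine .inr ⟨m, P.M m ⟨s.next m, h⟩, isUnmatched_eq_true_iff.mp hum, by simp, ?_⟩
    unfold GSstep
    rw [hf]
    simp only [dif_pos h]
    rcases hw : s.wmatch (P.M m ⟨s.next m, h⟩) with - | m'
    · exact .inl ⟨by simp, rfl⟩
    · by_cases hpref : P.wpref (P.M m ⟨s.next m, h⟩) m m'
      · exact .inl ⟨by simpa using hpref, if_pos hpref⟩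
      · exact .inr ⟨⟨m', rfl, hpref⟩, if_neg hpref⟩

structure GSInv (P : Profile n) (s : GSState n) : Prop where
  next_le : ∀ m, s.next m ≤ n
  mem_props_iff : ∀ m w, (m, w) ∈ s.props ↔ ((P.M m).symm w : ℕ) < s.next m
  next_of_holds : ∀ w m, s.wmatch w = some m → s.next m = (P.M m).symm w + 1
  holds_of_mem_props : ∀ m w, (m, w) ∈ s.props →
    ∃ m', s.wmatch w = some m' ∧ (P.W w).symm m' ≤ (P.W w).symm m

namespace GSInv

variable {P : Profile n} {s : GSState n}

lemma init (P : Profile n) : GSInv P (GSinit n) := by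
  constructor <;> simp [GSinit]

lemma holds_inj (hI : GSInv P s) {w₁ w₂ m : Fin n} (h₁ : s.wmatch w₁ = some m)
    (h₂ : s.wmatch w₂ = some m) : w₁ = w₂ := by
  have := (hI.next_of_holds w₁ m h₁).symm.trans (hI.next_of_holds w₂ m h₂)
  exact (P.M m).symm.injective (Fin.ext (by omega))

lemma next_update_le (hI : GSInv P s) {m w : Fin n} (hw : ((P.M m).symm w : ℕ) = s.next m)
    (m' : Fin n) : Function.update s.next m (s.next m + 1) m' ≤ n := by
  rcases eq_or_ne m' m with rfl | hm'
  · simp only [Function.update_self]; omega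
  · simpa only [Function.update_of_ne hm'] using hI.next_le m'

lemma mem_cons_props_iff (hI : GSInv P s) {m w : Fin n} (hw : ((P.M m).symm w : ℕ) = s.next m)
    (m' w' : Fin n) : (m', w') ∈ (m, w) :: s.props ↔
      ((P.M m').symm w' : ℕ) < Function.update s.next m (s.next m + 1) m' := by
  rw [List.mem_cons, hI.mem_props_iff]
  rcases eq_or_ne m' m with rfl | hm'
  · have : w' = w ↔ ((P.M m').symm w' : ℕ) = s.next m' := by
      rw [← hw, Fin.val_inj, Equiv.apply_eq_iff_eq]
    simp only [Prod.mk.injEq, true_and, Function.update_self, this]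
    omega
  · simp [hm']

lemma acceptState (hI : GSInv P s) {m w : Fin n} (hm : ∀ u, s.wmatch u ≠ some m)
    (hw : ((P.M m).symm w : ℕ) = s.next m)
    (hbetter : ∀ m', s.wmatch w = some m' → P.wpref w m m') :
    GSInv P (acceptState s m w) where
  next_le := hI.next_update_le hw
  mem_props_iff := hI.mem_cons_props_iff hw
  next_of_holds w' m' h := by
    simp only [_root_.acceptState] at h ⊢
    rcases eq_or_ne w' w with rfl | hw'
    · obtain rfl : m = m' := by simpa using h
      simp [hw]
    · rw [Function.update_of_ne hw'] at h
      have hm' : m' ≠ m := by rintro rfl; exact hm w' h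
      rw [Function.update_of_ne hm']
      exact hI.next_of_holds w' m' h
  holds_of_mem_props m' w' h := by
    simp only [_root_.acceptState]
    rcases List.mem_cons.mp h with h | h
    · obtain ⟨rfl, rfl⟩ := Prod.mk.inj h
      exact ⟨m', by simp, le_rfl⟩
    · obtain ⟨m'', h'', hle⟩ := hI.holds_of_mem_props m' w' h
      rcases eq_or_ne w' w with rfl | hw'
      · exact ⟨m, by simp, (hbetter m'' h'').le.trans hle⟩
      · exact ⟨m'', by rwa [Function.update_of_ne hw'], hle⟩

lemma rejectState (hI : GSInv P s) {m w : Fin n} (hm : ∀ u, s.wmatch u ≠ some m)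
    (hw : ((P.M m).symm w : ℕ) = s.next m)
    (hworse : ∃ m', s.wmatch w = some m' ∧ ¬ P.wpref w m m') :
    GSInv P (rejectState s m w) where
  next_le := hI.next_update_le hw
  mem_props_iff := hI.mem_cons_props_iff hw
  next_of_holds w' m' h := by
    have hm' : m' ≠ m := by rintro rfl; exact hm w' h
    simpa [_root_.rejectState, Function.update_of_ne hm'] using hI.next_of_holds w' m' h
  holds_of_mem_props m' w' h := by
    rcases List.mem_cons.mp h with h | h
    · obtain ⟨rfl, rfl⟩ := Prod.mk.inj h
      obtain ⟨m'', h'', hnot⟩ := hworse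
      exact ⟨m'', h'', not_lt.mp hnot⟩
    · exact hI.holds_of_mem_props m' w' h

lemma GSstep (hI : GSInv P s) : GSInv P (GSstep P s) := by
  rcases GSstep_cases P s with ⟨hfix, -⟩ | ⟨m, w, hm, hw, ⟨hbetter, hstep⟩ | ⟨hworse, hstep⟩⟩
  · rwa [hfix]
  · rw [hstep]; exact hI.acceptState hm hw hbetter
  · rw [hstep]; exact hI.rejectState hm hw hworse

end GSInv

/-- No man has yet been rejected by a woman he is matched to in some stable matching. -/
def HoldsStablePartners (P : Profile n) (s : GSState n) : Prop :=
  ∀ μ, Stable P μ → ∀ m, (m, μ m) ∈ s.props → s.wmatch (μ m) = some m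

namespace HoldsStablePartners

variable {P : Profile n} {s : GSState n}

lemma init (P : Profile n) : HoldsStablePartners P (GSinit n) := by
  simp [HoldsStablePartners, GSinit]

lemma next_le_of_stable (hH : HoldsStablePartners P s) (hI : GSInv P s) {μ : Fin n → Fin n}
    (hμ : Stable P μ) {m : Fin n} (hm : s.wmatch (μ m) ≠ some m) :
    s.next m ≤ (P.M m).symm (μ m) :=
  not_lt.mp fun h => hm (hH μ hμ m ((hI.mem_props_iff m (μ m)).mpr h))

-- If `w` drops her stable partner `m'` for `m`, then `(m, w)` blocks `μ`.
lemma acceptState (hH : HoldsStablePartners P s) (hI : GSInv P s) {m w : Fin n}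
    (hm : ∀ u, s.wmatch u ≠ some m) (hw : ((P.M m).symm w : ℕ) = s.next m)
    (hbetter : ∀ m', s.wmatch w = some m' → P.wpref w m m') :
    HoldsStablePartners P (acceptState s m w) := by
  intro μ hμ m' hmem
  simp only [_root_.acceptState] at hmem ⊢
  rcases List.mem_cons.mp hmem with hpair | hmem
  · obtain ⟨hm', hμm'⟩ := Prod.mk.inj hpair
    subst m'
    rw [hμm', Function.update_self]
  · have hold := hH μ hμ m' hmem
    rcases eq_or_ne (μ m') w with hμm' | hμm'
    · refine absurd ⟨?_, m', hμm', hbetter m' (hμm' ▸ hold)⟩ (hμ.2 m w)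
      have hμm : μ m ≠ w := fun h => hm _ (hμ.1.1 (h.trans hμm'.symm) ▸ hold)
      have := hH.next_le_of_stable hI hμ (hm (μ m))
      have : (P.M m).symm w ≠ (P.M m).symm (μ m) := fun h => hμm ((P.M m).symm.injective h).symm
      simp only [Profile.mpref, Fin.lt_def, ← Fin.val_ne_iff] at this ⊢
      omega
    · rwa [Function.update_of_ne hμm']

-- If `w` rejects her stable partner `m` while holding `m'`, then `(m', w)` blocks `μ`.
lemma rejectState (hH : HoldsStablePartners P s) (hI : GSInv P s) {m w : Fin n}
    (hm : ∀ u, s.wmatch u ≠ some m)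
    (hworse : ∃ m', s.wmatch w = some m' ∧ ¬ P.wpref w m m') :
    HoldsStablePartners P (rejectState s m w) := by
  intro μ hμ m₀ hmem
  rcases List.mem_cons.mp hmem with hpair | hmem
  · obtain ⟨hm₀, hμm⟩ := Prod.mk.inj hpair
    subst m₀
    obtain ⟨m', hm', hnot⟩ := hworse
    have hm'm : m' ≠ m := by rintro rfl; exact hm w hm'
    have hpref : P.wpref w m' m :=
      lt_of_le_of_ne (not_lt.mp hnot) fun h => hm'm ((P.W w).symm.injective h)
    refine absurd ⟨?_, m, hμm, hpref⟩ (hμ.2 m' w)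
    have hμm' : s.wmatch (μ m') ≠ some m' := fun h =>
      hm'm (hμ.1.1 ((hI.holds_inj h hm').trans hμm.symm))
    have := hH.next_le_of_stable hI hμ hμm'
    have := hI.next_of_holds w m' hm'
    simp only [Profile.mpref, Fin.lt_def]
    omega
  · exact hH μ hμ m₀ hmem

lemma GSstep (hH : HoldsStablePartners P s) (hI : GSInv P s) :
    HoldsStablePartners P (GSstep P s) := by
  rcases GSstep_cases P s with ⟨hfix, -⟩ | ⟨m, w, hm, hw, ⟨hbetter, hstep⟩ | ⟨hworse, hstep⟩⟩
  · rwa [hfix]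
  · rw [hstep]; exact hH.acceptState hI hm hw hbetter
  · rw [hstep]; exact hH.rejectState hI hm hworse

end HoldsStablePartners

lemma GSInv_and_holdsStablePartners_iterate (P : Profile n) (k : ℕ) :
    GSInv P ((GSstep P)^[k] (GSinit n)) ∧ HoldsStablePartners P ((GSstep P)^[k] (GSinit n)) := by
  induction k with
  | zero => exact ⟨.init P, .init P⟩
  | succ k ih =>
    rw [Function.iterate_succ_apply']
    exact ⟨ih.1.GSstep, ih.2.GSstep ih.1⟩

lemma GSInv_GSrun (P : Profile n) : GSInv P (GSrun P) :=
  (GSInv_and_holdsStablePartners_iterate P _).1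

lemma holdsStablePartners_GSrun (P : Profile n) : HoldsStablePartners P (GSrun P) :=
  (GSInv_and_holdsStablePartners_iterate P _).2

lemma GSstep_ne_of_proposal {P : Profile n} {s : GSState n} {m w : Fin n}
    (h : GSstep P s = acceptState s m w ∨ GSstep P s = rejectState s m w) : GSstep P s ≠ s := by
  intro hfix
  have : (GSstep P s).props = (m, w) :: s.props := by rcases h with h | h <;> rw [h] <;> rfl
  exact List.cons_ne_self _ _ (hfix ▸ this).symm

lemma sum_next_GSstep {P : Profile n} {s : GSState n} (hne : GSstep P s ≠ s) :
    ∑ m, (GSstep P s).next m = ∑ m, s.next m + 1 := by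
  rcases GSstep_cases P s with ⟨hfix, -⟩ | ⟨m, w, -, -, hcase⟩
  · exact absurd hfix hne
  have hnext : (GSstep P s).next = Function.update s.next m (s.next m + 1) := by
    rcases hcase with ⟨-, h⟩ | ⟨-, h⟩ <;> rw [h] <;> rfl
  rw [hnext, Finset.sum_update_of_mem (Finset.mem_univ m), ← Finset.add_sum_erase _ _
    (Finset.mem_univ m), Finset.sdiff_singleton_eq_erase]
  ring

lemma GSInv.sum_next_le {P : Profile n} {s : GSState n} (hI : GSInv P s) :
    ∑ m, s.next m ≤ n * n :=
  (Finset.sum_le_sum fun m _ => hI.next_le m).trans (by simp)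

lemma le_sum_next_iterate (P : Profile n) (k : ℕ)
    (hk : ∀ j < k, GSstep P ((GSstep P)^[j] (GSinit n)) ≠ (GSstep P)^[j] (GSinit n)) :
    k ≤ ∑ m, ((GSstep P)^[k] (GSinit n)).next m := by
  induction k with
  | zero => exact Nat.zero_le _
  | succ k ih =>
    rw [Function.iterate_succ_apply', sum_next_GSstep (hk k k.lt_succ_self)]
    exact Nat.succ_le_succ (ih fun j hj => hk j (hj.trans k.lt_succ_self))

-- Every non-idle step is a new proposal, and at most `n * n` proposals can be made.
lemma GSstep_GSrun (P : Profile n) : GSstep P (GSrun P) = GSrun P := by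
  obtain ⟨j, hj, hfix⟩ : ∃ j < n * n + 1,
      GSstep P ((GSstep P)^[j] (GSinit n)) = (GSstep P)^[j] (GSinit n) := by
    by_contra! h
    have := le_sum_next_iterate P _ h
    have := (GSInv_GSrun P).sum_next_le
    rw [GSrun] at this
    omega
  rw [GSrun, show n * n + 1 = (n * n + 1 - j) + j by omega, Function.iterate_add_apply,
    Function.iterate_fixed hfix]
  exact hfix

-- A man still unmatched at the end has proposed to every woman, so every woman holds
-- someone; holding is injective, hence by pigeonhole it covers every man.
lemma exists_wmatch_GSrun (P : Profile n) (m : Fin n) : ∃ w, (GSrun P).wmatch w = some m := by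
  by_contra! hm
  have hI := GSInv_GSrun P
  obtain ⟨-, hexhausted⟩ | ⟨m₀, w₀, -, -, hcase⟩ := GSstep_cases P (GSrun P)
  · have hheld (w : Fin n) : ∃ m', (GSrun P).wmatch w = some m' := by
      have := hexhausted m hm
      obtain ⟨m', hm', -⟩ := hI.holds_of_mem_props m w ((hI.mem_props_iff m w).mpr (by omega))
      exact ⟨m', hm'⟩
    choose f hf using hheld
    have hf_inj : Function.Injective f := fun w₁ w₂ h => hI.holds_inj (hf w₁) (h ▸ hf w₂)
    obtain ⟨w, hw⟩ := Finite.surjective_of_injective hf_inj m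
    exact hm w (hw ▸ hf w)
  · exact GSstep_ne_of_proposal (hcase.imp And.right And.right) (GSstep_GSrun P)

lemma wmatch_GSrun_DA (P : Profile n) (m : Fin n) : (GSrun P).wmatch (DA P m) = some m := by
  have h := exists_wmatch_GSrun P m
  rw [DA, dif_pos h]
  exact h.choose_spec

lemma DA_injective (P : Profile n) : Function.Injective (DA P) := fun m₁ m₂ h =>
  Option.some.inj ((wmatch_GSrun_DA P m₁).symm.trans (h ▸ wmatch_GSrun_DA P m₂))

lemma next_GSrun (P : Profile n) (m : Fin n) :
    (GSrun P).next m = (P.M m).symm (DA P m) + 1 :=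
  (GSInv_GSrun P).next_of_holds _ _ (wmatch_GSrun_DA P m)

lemma proposes_iff (P : Profile n) (m w : Fin n) :
    Proposes P m w ↔ (P.M m).symm w ≤ (P.M m).symm (DA P m) := by
  rw [Proposes, (GSInv_GSrun P).mem_props_iff, next_GSrun, Fin.le_def]
  omega

lemma DA_stable (P : Profile n) : Stable P (DA P) := by
  refine ⟨⟨DA_injective P, Finite.surjective_of_injective (DA_injective P)⟩, ?_⟩
  rintro m w ⟨hpref, m', rfl, hwpref⟩
  obtain ⟨m'', hm'', hle⟩ :=
    (GSInv_GSrun P).holds_of_mem_props m _ ((proposes_iff P m _).mpr hpref.le)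
  obtain rfl : m'' = m' := Option.some.inj (hm''.symm.trans (wmatch_GSrun_DA P m'))
  exact absurd hwpref (not_lt.mpr hle)

lemma DA_le_of_stable {P : Profile n} {μ : Fin n → Fin n} (hμ : Stable P μ) (m : Fin n) :
    (P.M m).symm (DA P m) ≤ (P.M m).symm (μ m) := by
  by_contra! h
  have hμm := holdsStablePartners_GSrun P μ hμ m ((proposes_iff P m _).mpr h.le)
  exact h.ne (congrArg _ ((GSInv_GSrun P).holds_inj (wmatch_GSrun_DA P m) hμm).symm)

end GaleShapley

section Manipulation

variable {n : ℕ}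

lemma Profile.updateM_M_self (P : Profile n) (m : Fin n) (e : Fin n ≃ Fin n) :
    (P.updateM m e).M m = e := by
  simp [Profile.updateM]

lemma Profile.updateM_M_of_ne (P : Profile n) {m m' : Fin n} (e : Fin n ≃ Fin n) (h : m' ≠ m) :
    (P.updateM m e).M m' = P.M m' := by
  simp [Profile.updateM, h]

lemma symm_le_of_above_subset {e e' : Fin n ≃ Fin n} {w₀ w : Fin n}
    (h : Above e w₀ ⊆ Above e' w₀) (hw : e.symm w ≤ e.symm w₀) : e'.symm w ≤ e'.symm w₀ := by
  rcases hw.lt_or_eq with hw | hw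
  · exact (h hw).le
  · rw [e.symm.injective hw]

lemma Stable.of_updateM {P : Profile n} {m : Fin n} {e : Fin n ≃ Fin n} {μ : Fin n → Fin n}
    (hμ : Stable (P.updateM m e) μ) (h : Above (P.M m) (μ m) ⊆ Above e (μ m)) : Stable P μ := by
  refine ⟨hμ.1, fun m' w ⟨hpref, hw⟩ => hμ.2 m' w ⟨?_, hw⟩⟩
  rcases eq_or_ne m' m with rfl | hm'
  · rw [Profile.mpref, Profile.updateM_M_self]
    exact h hpref
  · rwa [Profile.mpref, Profile.updateM_M_of_ne P e hm']

end Manipulation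

theorem noRegret_pushUp_proposals_contained_general (n : ℕ) (P : Profile n) (m : Fin n)
    (X : Set (Fin n))
    (e' : Fin n ≃ Fin n) (hpu : PushUp P m X e')
    (hnr : DA (P.updateM m e') m = DA P m) :
    ∀ mi wj : Fin n, Proposes P mi wj → Proposes (P.updateM m e') mi wj := by
  have habove : Above (P.M m) (DA P m) ⊆ Above e' (DA P m) := by
    rw [PushUp, PushUpDown, Set.sdiff_empty] at hpu
    exact hpu ▸ Set.subset_union_left
  have hstable : Stable P (DA (P.updateM m e')) := (DA_stable _).of_updateM (hnr ▸ habove)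
  intro mi wj hprop
  rw [proposes_iff] at hprop ⊢
  rcases eq_or_ne mi m with rfl | hmi
  · rw [Profile.updateM_M_self, hnr]
    exact symm_le_of_above_subset habove hprop
  · rw [Profile.updateM_M_of_ne P e' hmi]
    exact hprop.trans (DA_le_of_stable hstable mi)

/-- Under a no-regret push-up, every proposal made during the run of
DA on the true profile also occurs during the run of DA on the manipulated profile. -/
theorem noRegret_pushUp_proposals_contained (n : ℕ) (P : Profile n) (m : Fin n)
    (X : Set (Fin n)) (hX : X ⊆ Below (P.M m) (DA P m))
    (e' : Fin n ≃ Fin n) (hpu : PushUp P m X e')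
    (hnr : DA (P.updateM m e') m = DA P m) :
    ∀ mi wj : Fin n, Proposes P mi wj → Proposes (P.updateM m e') mi wj :=
  noRegret_pushUp_proposals_contained_general n P m X e' hpu hnr
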